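/- Let E be a vector space over a field K decomposed as a direct sum G = E_{n_1} ⊕ ... ⊕ E_{n_m} of subspaces of an n-dimensional space E (with E_1 ⊂ ... ⊂ E_n a flag, dim E_j = j), let L ⊆ E⊗E be a subspace, and let L_G = ⊕_{1≤j,k≤m} (E_{n_j} ⊗ E_{n_k}) ∩ L inside G⊗G. Then for every q ≥ 2, dim E_q(L_G, G) ≤ m^q · dim E_q(L, E), where E_q(L, E) = ∩_{j=1}^{q-1} E^{⊗(j-1)} ⊗ L ⊗ E^{⊗(q-1-j)}. -/

import Mathlib

/-
Let `τᵢ : G → E` be the `i`-th projection followed by the inclusion `E_{nᵢ} ⊆ E`. Since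
`τₐ ⊗ τ_b` kills every summand of `L_G` except the `(a, b)` one, where it agrees with `σ ⊗ σ`,
it maps `L_G` into `L`; hence for every word `f : Fin q → Fin m` the map `⨂ₛ τ_{f s}` carries
`E_q(L_G, G)` into `E_q(L, E)`. Choosing retractions with `∑ᵢ ρᵢ τᵢ = id`, multilinearity of
`⨂` gives `∑_f (⨂ₛ ρ_{f s}) ∘ (⨂ₛ τ_{f s}) = id`, so these `m^q` maps are jointly injective
and `E_q(L_G, G)` embeds into `E_q(L, E)^{m^q}`.
-/

open TensorProduct

namespace GS

variable (K : Type*) [Field K] (V : Type*) [AddCommGroup V] [Module K V]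

/-- The tensor product of two subspaces, as a subspace of the tensor product. -/
noncomputable def tsub {M N : Type*} [AddCommGroup M] [Module K M] [AddCommGroup N] [Module K N]
    (A : Submodule K M) (B : Submodule K N) : Submodule K (M ⊗[K] N) :=
  LinearMap.range (TensorProduct.map A.subtype B.subtype)

/-- `V ≃ V^{⊗1}`. -/
noncomputable def pow1 : V ≃ₗ[K] ⨂[K]^1 V :=
  (PiTensorProduct.subsingletonEquiv (s := fun _ : Fin 1 => V) (0 : Fin 1)).symm

/-- `V ⊗ V ≃ V^{⊗2}`. -/
noncomputable def pow2 : (V ⊗[K] V) ≃ₗ[K] ⨂[K]^2 V :=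
  (TensorProduct.congr (pow1 K V) (pow1 K V)).trans
    ((TensorPower.mulEquiv (n := 1) (m := 1)).trans (TensorPower.cast K V (by norm_num)))

/-- The subspace `V^{⊗a} ⊗ L ⊗ V^{⊗b}` of `V^{⊗(a+(2+b))}`. -/
noncomputable def segAux (a b : ℕ) (L : Submodule K (V ⊗[K] V)) :
    Submodule K (⨂[K]^(a + (2 + b)) V) :=
  Submodule.map (TensorPower.mulEquiv (R := K) (M := V) (n := a) (m := 2 + b)).toLinearMap
    (tsub K (⊤ : Submodule K (⨂[K]^a V))
      (Submodule.map (TensorPower.mulEquiv (R := K) (M := V) (n := 2) (m := b)).toLinearMap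
        (tsub K (L.map (pow2 K V : (V ⊗[K] V) →ₗ[K] ⨂[K]^2 V)) (⊤ : Submodule K (⨂[K]^b V)))))

/-- For `j : Fin (q-1)`, the subspace `V^{⊗j} ⊗ L ⊗ V^{⊗(q-2-j)}` of `V^{⊗q}`
(the `(j+1)`-st shift of `L`). -/
noncomputable def shiftSub (q : ℕ) (L : Submodule K (V ⊗[K] V)) (j : Fin (q - 1)) :
    Submodule K (⨂[K]^q V) :=
  Submodule.map (TensorPower.cast K V (by have := j.2; omega : (j : ℕ) + (2 + (q - 2 - j)) = q)).toLinearMap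
    (segAux K V j (q - 2 - j) L)

/-- `E_q(L,V) = ⋂_{j=1}^{q-1} V^{⊗(j-1)} ⊗ L ⊗ V^{⊗(q-1-j)} ⊆ V^{⊗q}`. -/
noncomputable def Eint (q : ℕ) (L : Submodule K (V ⊗[K] V)) : Submodule K (⨂[K]^q V) :=
  ⨅ j : Fin (q - 1), shiftSub K V q L j

/-- The degree-`q` component of the two-sided ideal generated by the subspace
`M ⊆ V ⊗ V` of quadratic relations: the sum of all shifts `V^{⊗(j-1)} ⊗ M ⊗ V^{⊗(q-1-j)}`. -/
noncomputable def idealComp (q : ℕ) (M : Submodule K (V ⊗[K] V)) : Submodule K (⨂[K]^q V) :=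
  ⨆ j : Fin (q - 1), shiftSub K V q M j

/-- The dimension of the degree-`q` component of the quadratic algebra with space of
relations `M ⊆ V ⊗ V` (the quotient of `V^{⊗q}` by the degree-`q` component of the ideal). -/
noncomputable def quadDim (q : ℕ) (M : Submodule K (V ⊗[K] V)) : ℕ :=
  Module.finrank K ((⨂[K]^q V) ⧸ idealComp K V q M)

/-- `h_q(K,n,d)`: the minimal dimension of the `q`-th graded component over all quadratic
`K`-algebras with `n` generators and `d` (linearly independent) quadratic relations. -/
noncomputable def hq (n d q : ℕ) : ℕ :=
  sInf { h | ∃ M : Submodule K ((Fin n → K) ⊗[K] (Fin n → K)),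
      Module.finrank K M = d ∧ quadDim K (Fin n → K) q M = h }

end GS

open TensorProduct PiTensorProduct

namespace TensorPower

variable {R : Type*} [CommSemiring R] {P E : Type*} [AddCommMonoid P] [Module R P]
  [AddCommMonoid E] [Module R E]

theorem map_comp_cast {a b : ℕ} (g : Fin b → (P →ₗ[R] E)) (h : a = b) :
    PiTensorProduct.map g ∘ₗ (cast R P h).toLinearMap
      = (cast R E h).toLinearMap ∘ₗ PiTensorProduct.map (fun i => g (Fin.cast h i)) := by
  subst h
  simp [cast_refl]

theorem map_comp_mulEquiv {a b : ℕ} (g : Fin (a + b) → (P →ₗ[R] E)) :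
    PiTensorProduct.map g ∘ₗ (mulEquiv (R := R) (M := P) (n := a) (m := b)).toLinearMap
      = mulEquiv.toLinearMap ∘ₗ
        TensorProduct.map (PiTensorProduct.map (fun i => g (Fin.castAdd b i)))
          (PiTensorProduct.map (fun i => g (Fin.natAdd a i))) := by
  ext x y
  simp only [LinearMap.compMultilinearMap_apply, LinearMap.coe_comp, Function.comp_apply,
    LinearEquiv.coe_coe, TensorProduct.AlgebraTensorModule.curry_apply, TensorProduct.curry_apply,
    LinearMap.coe_restrictScalars, PiTensorProduct.map_tprod, TensorProduct.map_tmul,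
    mulEquiv, LinearEquiv.trans_apply, tmulEquiv_apply, reindex_tprod]
  congr 1
  funext i
  obtain ⟨s | s, rfl⟩ := finSumFinEquiv.surjective i <;> simp

theorem subsingleton [Subsingleton P] {q : ℕ} (hq : q ≠ 0) : Subsingleton (⨂[R]^q P) := by
  refine subsingleton_of_forall_eq 0 fun x => ?_
  have hid : (LinearMap.id : P →ₗ[R] P) = 0 := Subsingleton.elim _ _
  rw [← LinearMap.id_apply (R := R) x, ← PiTensorProduct.map_id, hid,
    ← mapMultilinear_apply, (mapMultilinear R _ _).map_coord_zero ⟨0, Nat.pos_of_ne_zero hq⟩ rfl,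
    LinearMap.zero_apply]

variable {ι : Type*} [Fintype ι]

theorem sum_map_comp_map_eq_id (τ : ι → P →ₗ[R] E) (ρ : ι → E →ₗ[R] P)
    (hid : ∑ i, ρ i ∘ₗ τ i = LinearMap.id) (q : ℕ) :
    ∑ f : Fin q → ι,
        PiTensorProduct.map (fun s => ρ (f s)) ∘ₗ PiTensorProduct.map (fun s => τ (f s))
      = (LinearMap.id : ⨂[R]^q P →ₗ[R] ⨂[R]^q P) := by
  classical
  simp_rw [← PiTensorProduct.map_comp]
  have := (mapMultilinear R (fun _ : Fin q => P) (fun _ => P)).map_sum fun _ i => ρ i ∘ₗ τ i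
  simp only [mapMultilinear_apply, hid, PiTensorProduct.map_id] at this
  exact this.symm

theorem injective_pi_map (τ : ι → P →ₗ[R] E) (ρ : ι → E →ₗ[R] P)
    (hid : ∑ i, ρ i ∘ₗ τ i = LinearMap.id) (q : ℕ) :
    Function.Injective
      (LinearMap.pi fun f : Fin q → ι => PiTensorProduct.map fun s => τ (f s)) := by
  refine Function.LeftInverse.injective
    (g := fun y => ∑ f : Fin q → ι, PiTensorProduct.map (fun s => ρ (f s)) (y f)) fun x => ?_
  simpa using LinearMap.congr_fun (sum_map_comp_map_eq_id τ ρ hid q) x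

end TensorPower

namespace GS

variable {K : Type*} [Field K] {P E : Type*} [AddCommGroup P] [Module K P]
  [AddCommGroup E] [Module K E]

theorem pow1_apply (v : P) : pow1 K P v = tprod K fun _ => v := by
  rw [pow1, LinearEquiv.symm_apply_eq, subsingletonEquiv_apply_tprod]

theorem map_comp_pow2 (g : Fin 2 → (P →ₗ[K] E)) :
    PiTensorProduct.map g ∘ₗ (pow2 K P).toLinearMap
      = (pow2 K E).toLinearMap ∘ₗ TensorProduct.map (g 0) (g 1) := by
  ext x y
  simp only [pow2, TensorPower.mulEquiv, TensorPower.cast_refl, LinearEquiv.trans_refl,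
    AlgebraTensorModule.curry_apply, LinearMap.restrictScalars_self, curry_apply,
    LinearMap.coe_comp, LinearEquiv.coe_coe, Function.comp_apply, LinearEquiv.trans_apply,
    congr_tmul, pow1_apply, tmulEquiv_apply, reindex_tprod, map_tprod, map_tmul]
  congr 1
  funext i
  fin_cases i <;> rfl

theorem map_tsub_le {M N M' N' : Type*} [AddCommGroup M] [Module K M] [AddCommGroup N]
    [Module K N] [AddCommGroup M'] [Module K M'] [AddCommGroup N'] [Module K N']
    {A : M →ₗ[K] M'} {B : N →ₗ[K] N'} {S₁ : Submodule K M} {S₂ : Submodule K N}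
    {T₁ : Submodule K M'} {T₂ : Submodule K N'} (h₁ : S₁.map A ≤ T₁) (h₂ : S₂.map B ≤ T₂) :
    (tsub K S₁ S₂).map (TensorProduct.map A B) ≤ tsub K T₁ T₂ := by
  rw [tsub, tsub, ← LinearMap.range_comp, ← TensorProduct.map_comp]
  exact TensorProduct.range_map_mono (by rwa [LinearMap.range_comp, Submodule.range_subtype,
    Submodule.range_subtype]) (by rwa [LinearMap.range_comp, Submodule.range_subtype,
    Submodule.range_subtype])

section Functoriality

variable {M : Submodule K (P ⊗[K] P)} {L : Submodule K (E ⊗[K] E)}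

theorem map_segAux_le {a b : ℕ} (g : Fin (a + (2 + b)) → (P →ₗ[K] E))
    (hML : ∀ s t, M.map (TensorProduct.map (g s) (g t)) ≤ L) :
    (segAux K P a b M).map (PiTensorProduct.map g) ≤ segAux K E a b L := by
  rw [segAux, segAux, ← Submodule.map_comp, TensorPower.map_comp_mulEquiv, Submodule.map_comp]
  refine Submodule.map_mono (map_tsub_le le_top ?_)
  rw [← Submodule.map_comp, TensorPower.map_comp_mulEquiv, Submodule.map_comp]
  refine Submodule.map_mono (map_tsub_le ?_ le_top)
  rw [← Submodule.map_comp, map_comp_pow2, Submodule.map_comp]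
  exact Submodule.map_mono (hML _ _)

theorem map_shiftSub_le {q : ℕ} (g : Fin q → (P →ₗ[K] E))
    (hML : ∀ s t, M.map (TensorProduct.map (g s) (g t)) ≤ L) (j : Fin (q - 1)) :
    (shiftSub K P q M j).map (PiTensorProduct.map g) ≤ shiftSub K E q L j := by
  rw [shiftSub, shiftSub, ← Submodule.map_comp, TensorPower.map_comp_cast, Submodule.map_comp]
  exact Submodule.map_mono (map_segAux_le _ fun s t => hML _ _)

theorem map_Eint_le {q : ℕ} (g : Fin q → (P →ₗ[K] E))
    (hML : ∀ s t, M.map (TensorProduct.map (g s) (g t)) ≤ L) :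
    (Eint K P q M).map (PiTensorProduct.map g) ≤ Eint K E q L :=
  le_iInf fun j => (Submodule.map_mono (iInf_le _ j)).trans (map_shiftSub_le g hML j)

theorem finrank_Eint_le {ι : Type*} [Fintype ι] [FiniteDimensional K E]
    (τ : ι → P →ₗ[K] E) (ρ : ι → E →ₗ[K] P) (hid : ∑ i, ρ i ∘ₗ τ i = LinearMap.id)
    (hML : ∀ a b, M.map (TensorProduct.map (τ a) (τ b)) ≤ L) (q : ℕ) :
    Module.finrank K (Eint K P q M) ≤ Fintype.card ι ^ q * Module.finrank K (Eint K E q L) := by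
  let Φ : Eint K P q M →ₗ[K] (Fin q → ι) → Eint K E q L := LinearMap.pi fun f =>
    (PiTensorProduct.map fun s => τ (f s)).restrict fun x hx =>
      map_Eint_le _ (fun s t => hML _ _) (Submodule.mem_map_of_mem hx)
  have hΦ : Function.Injective Φ := fun x y hxy => Subtype.ext <|
    TensorPower.injective_pi_map τ ρ hid q <| funext fun f => congrArg Subtype.val (congrFun hxy f)
  calc Module.finrank K (Eint K P q M)
      ≤ Module.finrank K ((Fin q → ι) → Eint K E q L) :=
        LinearMap.finrank_le_finrank_of_injective hΦ
    _ = Fintype.card ι ^ q * Module.finrank K (Eint K E q L) := by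
        simp [Module.finrank_pi_fintype]

end Functoriality

section DirectSum

variable {ι : Type*} [DecidableEq ι] (W : ι → Submodule K E)

theorem subtype_proj_comp_single (a j : ι) :
    ((W a).subtype ∘ₗ LinearMap.proj a) ∘ₗ LinearMap.single K (fun i => W i) j
      = if a = j then (W j).subtype else 0 := by
  split_ifs with h
  · subst h
    ext
    simp
  · ext
    simp [Ne.symm h]

theorem sum_subtype_proj_comp_single [Fintype ι] (j : ι) :
    (∑ i, (W i).subtype ∘ₗ LinearMap.proj i) ∘ₗ LinearMap.single K (fun i => W i) j
      = (W j).subtype := by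
  ext x
  rw [LinearMap.comp_apply, LinearMap.sum_apply, Finset.sum_eq_single j (by simp_all) (by simp)]
  simp

theorem map_subtype_proj_le [Fintype ι] (L : Submodule K (E ⊗[K] E)) (a b : ι) :
    (⨆ j : ι, ⨆ k : ι, LinearMap.range (TensorProduct.map
        (LinearMap.single K (fun i => W i) j) (LinearMap.single K (fun i => W i) k)) ⊓
      L.comap (TensorProduct.map (∑ i, (W i).subtype ∘ₗ LinearMap.proj i)
        (∑ i, (W i).subtype ∘ₗ LinearMap.proj i))).map
      (TensorProduct.map ((W a).subtype ∘ₗ LinearMap.proj a) ((W b).subtype ∘ₗ LinearMap.proj b))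
      ≤ L := by
  simp_rw [Submodule.map_iSup, iSup_le_iff]
  rintro j k _ ⟨_, ⟨⟨u, rfl⟩, hu⟩, rfl⟩
  rw [SetLike.mem_coe, Submodule.mem_comap, TensorProduct.map_map,
    sum_subtype_proj_comp_single, sum_subtype_proj_comp_single] at hu
  rw [TensorProduct.map_map, subtype_proj_comp_single, subtype_proj_comp_single]
  split_ifs with haj hbk
  · subst haj hbk
    exact hu
  all_goals simp

end DirectSum

end GS

theorem main_lemma_general (K : Type*) [Field K] (E : Type*) [AddCommGroup E] [Module K E]
    (n m q : ℕ) (hq2 : 2 ≤ q) (hE : Module.finrank K E = n)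
    (F : ℕ → Submodule K E)
    (nj : Fin m → ℕ) (hnj : ∀ i, 1 ≤ nj i ∧ nj i ≤ n)
    (L : Submodule K (E ⊗[K] E)) :
    -- `G` is the (external) direct sum of the subspaces `E_{n₁}, ..., E_{n_m}`
    let G := ∀ i : Fin m, F (nj i)
    -- the canonical map `G → E` summing the inclusions of the summands
    let σ : G →ₗ[K] E := ∑ i : Fin m, (F (nj i)).subtype ∘ₗ LinearMap.proj i
    -- `L_G = ⊕_{j,k} L_{n_j,n_k}`, where the copy of `L_{n_j,n_k} = (E_{n_j} ⊗ E_{n_k}) ∩ L`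
    -- inside `G ⊗ G` is carved out of the `(j,k)`-summand `E_{n_j} ⊗ E_{n_k}` of `G ⊗ G`
    -- as the set of elements mapped into `L` by `σ ⊗ σ`
    let LG : Submodule K (G ⊗[K] G) := ⨆ j : Fin m, ⨆ k : Fin m,
      LinearMap.range (TensorProduct.map
          ((LinearMap.single K (fun i => F (nj i)) j : _ →ₗ[K] G))
          ((LinearMap.single K (fun i => F (nj i)) k : _ →ₗ[K] G))) ⊓
        Submodule.comap (TensorProduct.map σ σ) L
    Module.finrank K (GS.Eint K G q LG) ≤ m ^ q * Module.finrank K (GS.Eint K E q L) := by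
  intro G σ LG
  rcases Nat.eq_zero_or_pos m with rfl | hm
  · have := TensorPower.subsingleton (R := K) (P := G) (q := q) (by omega)
    simp [Module.finrank_zero_of_subsingleton]
  have : FiniteDimensional K E :=
    Module.finite_of_finrank_pos (by have := hnj ⟨0, hm⟩; omega)
  choose r hr using fun i =>
    (F (nj i)).subtype.exists_leftInverse_of_injective (F (nj i)).ker_subtype
  have hr_apply : ∀ i (y : F (nj i)), r i y = y := fun i => LinearMap.congr_fun (hr i)
  have hid : ∑ i, (LinearMap.single K (fun i => F (nj i)) i ∘ₗ r i) ∘ₗ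
      ((F (nj i)).subtype ∘ₗ LinearMap.proj i) = LinearMap.id := by
    refine LinearMap.ext fun x => ?_
    simpa [hr_apply] using Finset.univ_sum_single x
  simpa using GS.finrank_Eint_le _ _ hid
    (GS.map_subtype_proj_le (fun i => F (nj i)) L) q

/-- Main Lemma. Let `E` be an `n`-dimensional `K`-vector space with an
increasing flag `E₁ ⊂ ... ⊂ Eₙ = E` (`dim E_j = j`), `n₁,...,n_m ∈ {1,...,n}`,
`G = E_{n₁} ⊕ ... ⊕ E_{n_m}` and `L ⊆ E ⊗ E` a subspace. Let
`L_G = ⊕_{j,k} (E_{n_j} ⊗ E_{n_k}) ∩ L ⊆ G ⊗ G`. Then for every `q ≥ 2`,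
`dim E_q(L_G, G) ≤ m^q · dim E_q(L, E)`. -/
theorem main_lemma (K : Type*) [Field K] (E : Type*) [AddCommGroup E] [Module K E]
    (n m q : ℕ) (hq2 : 2 ≤ q) (hE : Module.finrank K E = n)
    (F : ℕ → Submodule K E)
    (hmono : ∀ j k, 1 ≤ j → j ≤ k → k ≤ n → F j ≤ F k)
    (hdim : ∀ j, 1 ≤ j → j ≤ n → Module.finrank K (F j) = j)
    (htop : F n = ⊤)
    (nj : Fin m → ℕ) (hnj : ∀ i, 1 ≤ nj i ∧ nj i ≤ n)
    (L : Submodule K (E ⊗[K] E)) :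
    -- `G` is the (external) direct sum of the subspaces `E_{n₁}, ..., E_{n_m}`
    let G := ∀ i : Fin m, F (nj i)
    -- the canonical map `G → E` summing the inclusions of the summands
    let σ : G →ₗ[K] E := ∑ i : Fin m, (F (nj i)).subtype ∘ₗ LinearMap.proj i
    -- `L_G = ⊕_{j,k} L_{n_j,n_k}`, where the copy of `L_{n_j,n_k} = (E_{n_j} ⊗ E_{n_k}) ∩ L`
    -- inside `G ⊗ G` is carved out of the `(j,k)`-summand `E_{n_j} ⊗ E_{n_k}` of `G ⊗ G`
    -- as the set of elements mapped into `L` by `σ ⊗ σ`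
    let LG : Submodule K (G ⊗[K] G) := ⨆ j : Fin m, ⨆ k : Fin m,
      LinearMap.range (TensorProduct.map
          ((LinearMap.single K (fun i => F (nj i)) j : _ →ₗ[K] G))
          ((LinearMap.single K (fun i => F (nj i)) k : _ →ₗ[K] G))) ⊓
        Submodule.comap (TensorProduct.map σ σ) L
    Module.finrank K (GS.Eint K G q LG) ≤ m ^ q * Module.finrank K (GS.Eint K E q L) :=
  main_lemma_general K E n m q hq2 hE F nj hnj L
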